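/- Let (a_n), (b_n) be positive nonincreasing sequences and p > 0, d > 0 such that for all n ≥ 1 both sup_{k ≤ n} k^{1/p}·b_k ≤ d·sup_{k ≤ n} k^{1/p}·a_k and sup_{k ≤ n} k^{1/p}·a_k ≤ d·sup_{k ≤ n} k^{1/p}·b_k. Then for any regular sequence (α_n): (a_n ≍ α_n) if and only if (b_n ≍ α_n), where x_n ≍ y_n means there exist constants giving two-sided domination x_n ≤ c₁·y_n and y_n ≤ c₂·x_n for all n. -/

import Mathlib

/-- `supUpTo p a n = sup_{1 ≤ k ≤ n} k^(1/p) * a k`. -/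
noncomputable def supUpTo (p : ℝ) (a : ℕ → ℝ) (n : ℕ) : ℝ :=
  ⨆ k ∈ Finset.Icc 1 n, (k : ℝ) ^ (1 / p) * a k

/-- `x ≍ y`: two-sided domination (for `n ≥ 1`). -/
def Asymp (x y : ℕ → ℝ) : Prop :=
  ∃ c₁ c₂ : ℝ, 0 < c₁ ∧ 0 < c₂ ∧
    (∀ n, 1 ≤ n → x n ≤ c₁ * y n) ∧ (∀ n, 1 ≤ n → y n ≤ c₂ * x n)

/-!
Suppose `a ≍ α`. Since `α` is regular, `sup_{k ≤ n} k^{1/p} a_k ≲ n^{1/p} α_n`, and the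
comparability of the weighted sups gives `b_n ≲ α_n`. For the lower bound take `N = m n`:
as `b` is nonincreasing, `sup_{k ≤ N} k^{1/p} b_k ≤ sup_{k ≤ n} k^{1/p} b_k + N^{1/p} b_n`, and
`N^{1/p} α_n ≲ N^{1/p} a_N ≲ sup_{k ≤ N} k^{1/p} b_k` then yields
`m^{1/p} α_n ≤ M α_n + C m^{1/p} b_n` with `M`, `C` independent of `m`. Choosing
`m^{1/p} > M` leaves `α_n ≲ b_n`. The statement is symmetric in `a` and `b`.
-/

section supUpTo

variable {p : ℝ} {x : ℕ → ℝ} {n : ℕ}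

lemma supUpTo_le {B : ℝ} (hB : 0 ≤ B)
    (h : ∀ k ∈ Finset.Icc 1 n, (k : ℝ) ^ (1 / p) * x k ≤ B) : supUpTo p x n ≤ B :=
  Real.iSup_le (fun k => Real.iSup_le (h k) hB) hB

lemma bddAbove_range_supUpTo :
    BddAbove (Set.range fun k : ℕ => ⨆ _ : k ∈ Finset.Icc 1 n, (k : ℝ) ^ (1 / p) * x k) := by
  refine ((((Finset.Icc 1 n).finite_toSet.image fun k : ℕ => (k : ℝ) ^ (1 / p) * x k).union
    (Set.finite_singleton 0)).subset ?_).bddAbove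
  rintro _ ⟨k, rfl⟩
  by_cases hk : k ∈ Finset.Icc 1 n
  · exact Or.inl ⟨k, hk, by simp [hk]⟩
  · exact Or.inr (by simp [hk])

lemma le_supUpTo {k : ℕ} (hk : k ∈ Finset.Icc 1 n) :
    (k : ℝ) ^ (1 / p) * x k ≤ supUpTo p x n :=
  (ciSup_pos hk).symm.le.trans (le_ciSup bddAbove_range_supUpTo k)

lemma supUpTo_nonneg : 0 ≤ supUpTo p x n :=
  le_ciSup_of_le bddAbove_range_supUpTo 0 (by simp)

lemma supUpTo_le_rpow_mul (hp : 0 ≤ p) {C : ℝ} (hC : 0 ≤ C)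
    (h : ∀ k, 1 ≤ k → k ≤ n → x k ≤ C) : supUpTo p x n ≤ (n : ℝ) ^ (1 / p) * C := by
  refine supUpTo_le (by positivity) fun k hk => ?_
  obtain ⟨hk1, hkn⟩ := Finset.mem_Icc.mp hk
  calc (k : ℝ) ^ (1 / p) * x k ≤ (k : ℝ) ^ (1 / p) * C := by gcongr; exact h k hk1 hkn
    _ ≤ (n : ℝ) ^ (1 / p) * C := by gcongr

lemma supUpTo_le_supUpTo_add (hp : 0 ≤ p) {N : ℕ} (hxn : 0 ≤ x n)
    (hx : ∀ k, n ≤ k → x k ≤ x n) :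
    supUpTo p x N ≤ supUpTo p x n + (N : ℝ) ^ (1 / p) * x n := by
  refine supUpTo_le (add_nonneg supUpTo_nonneg (by positivity)) fun k hk => ?_
  obtain ⟨hk1, hkN⟩ := Finset.mem_Icc.mp hk
  rcases le_total k n with hkn | hnk
  · exact (le_supUpTo (Finset.mem_Icc.mpr ⟨hk1, hkn⟩)).trans
      (le_add_of_nonneg_right (by positivity))
  · calc (k : ℝ) ^ (1 / p) * x k ≤ (k : ℝ) ^ (1 / p) * x n := by gcongr; exact hx k hnk
      _ ≤ (N : ℝ) ^ (1 / p) * x n := by gcongr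
      _ ≤ _ := le_add_of_nonneg_left supUpTo_nonneg

end supUpTo

lemma exists_nat_lt_rpow_inv {p : ℝ} (hp : 0 < p) (M : ℝ) :
    ∃ m : ℕ, 1 ≤ m ∧ M < (m : ℝ) ^ (1 / p) := by
  have h := (tendsto_rpow_atTop (one_div_pos.mpr hp)).comp tendsto_natCast_atTop_atTop
  exact ((h.eventually_gt_atTop M).and (Filter.eventually_ge_atTop 1)).exists.imp
    fun m hm => ⟨hm.2, hm.1⟩

section transfer

variable {a b α : ℕ → ℝ} {p c d : ℝ}

lemma exists_le_mul_of_supUpTo_le (hp : 0 < p) (hc : 0 < c) (hd : 0 < d)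
    {c₂ K : ℝ} (hc₂ : 0 < c₂)
    (hb : ∀ n, 1 ≤ n → 0 ≤ b n) (hbmono : ∀ m n : ℕ, 1 ≤ m → m ≤ n → b n ≤ b m)
    (hsup : ∀ n, 1 ≤ n → supUpTo p a n ≤ d * supUpTo p b n)
    (hreg : ∀ m n : ℕ, 1 ≤ m → m ≤ n → α m ≤ c * α n)
    (hαa : ∀ n, 1 ≤ n → α n ≤ c₂ * a n)
    (hsupb : ∀ n, 1 ≤ n → supUpTo p b n ≤ (n : ℝ) ^ (1 / p) * (K * α n)) :
    ∃ C, 0 < C ∧ ∀ n, 1 ≤ n → α n ≤ C * b n := by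
  set S := c * c₂ * d
  obtain ⟨m, hm, hQ⟩ := exists_nat_lt_rpow_inv hp (S * K)
  set Q := (m : ℝ) ^ (1 / p)
  have hQK : 0 < Q - S * K := sub_pos.mpr hQ
  have hQ₀ : 0 < Q := by positivity
  refine ⟨S * Q / (Q - S * K), by positivity, fun n hn => ?_⟩
  have hN : 1 ≤ m * n := Nat.one_le_iff_ne_zero.mpr (by positivity)
  have hnN : n ≤ m * n := Nat.le_mul_of_pos_left n hm
  set w := (n : ℝ) ^ (1 / p)
  have hw : 0 < w := by positivity
  have hwN : ((m * n : ℕ) : ℝ) ^ (1 / p) = Q * w := by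
    rw [Nat.cast_mul, Real.mul_rpow (by positivity) (by positivity)]
  have key : w * (Q * α n) ≤ w * (S * K * α n + S * Q * b n) :=
    calc w * (Q * α n) = ((m * n : ℕ) : ℝ) ^ (1 / p) * α n := by rw [hwN]; ring
      _ ≤ ((m * n : ℕ) : ℝ) ^ (1 / p) * (c * (c₂ * a (m * n))) := by
          gcongr
          exact (hreg n _ hn hnN).trans (by gcongr; exact hαa _ hN)
      _ = c * c₂ * (((m * n : ℕ) : ℝ) ^ (1 / p) * a (m * n)) := by ring
      _ ≤ c * c₂ * (d * supUpTo p b (m * n)) := by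
          gcongr c * c₂ * ?_
          exact (le_supUpTo (Finset.mem_Icc.mpr ⟨hN, le_rfl⟩)).trans (hsup _ hN)
      _ ≤ c * c₂ * (d * (supUpTo p b n + ((m * n : ℕ) : ℝ) ^ (1 / p) * b n)) := by
          gcongr
          exact supUpTo_le_supUpTo_add hp.le (hb n hn) fun k hk => hbmono n k hn hk
      _ ≤ c * c₂ * (d * (w * (K * α n) + ((m * n : ℕ) : ℝ) ^ (1 / p) * b n)) := by
          gcongr
          exact hsupb n hn
      _ = w * (S * K * α n + S * Q * b n) := by rw [hwN]; ring
  rw [div_mul_eq_mul_div, le_div_iff₀ hQK]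
  linarith [le_of_mul_le_mul_left key hw]

lemma Asymp.of_supUpTo_comparable (hp : 0 < p) (hc : 0 < c) (hd : 0 < d)
    (hb : ∀ n, 1 ≤ n → 0 ≤ b n) (hbmono : ∀ m n : ℕ, 1 ≤ m → m ≤ n → b n ≤ b m)
    (hsup1 : ∀ n, 1 ≤ n → supUpTo p b n ≤ d * supUpTo p a n)
    (hsup2 : ∀ n, 1 ≤ n → supUpTo p a n ≤ d * supUpTo p b n)
    (hα : ∀ n, 1 ≤ n → 0 ≤ α n) (hreg : ∀ m n : ℕ, 1 ≤ m → m ≤ n → α m ≤ c * α n)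
    (h : Asymp a α) : Asymp b α := by
  obtain ⟨c₁, c₂, hc₁, hc₂, haα, hαa⟩ := h
  have hsupb (n : ℕ) (hn : 1 ≤ n) :
      supUpTo p b n ≤ (n : ℝ) ^ (1 / p) * (d * c₁ * c * α n) := by
    have hαn := hα n hn
    calc supUpTo p b n ≤ d * supUpTo p a n := hsup1 n hn
      _ ≤ d * ((n : ℝ) ^ (1 / p) * (c₁ * (c * α n))) := by
          gcongr
          refine supUpTo_le_rpow_mul hp.le (by positivity) fun k hk hkn => ?_
          exact (haα k hk).trans (by gcongr; exact hreg k n hk hkn)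
      _ = _ := by ring
  have hbα (n : ℕ) (hn : 1 ≤ n) : b n ≤ d * c₁ * c * α n :=
    le_of_mul_le_mul_left ((le_supUpTo (Finset.mem_Icc.mpr ⟨hn, le_rfl⟩)).trans (hsupb n hn))
      (by positivity)
  obtain ⟨C, hC, hαb⟩ :=
    exists_le_mul_of_supUpTo_le hp hc hd hc₂ hb hbmono hsup2 hreg hαa hsupb
  exact ⟨d * c₁ * c, C, by positivity, hC, hbα, hαb⟩

end transfer

theorem two_sided_carl_trick_general (a b α : ℕ → ℝ) (p d c : ℝ)
    (ha : ∀ n, 1 ≤ n → 0 < a n) (hb : ∀ n, 1 ≤ n → 0 < b n)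
    (hamono : ∀ m n : ℕ, 1 ≤ m → m ≤ n → a n ≤ a m)
    (hbmono : ∀ m n : ℕ, 1 ≤ m → m ≤ n → b n ≤ b m)
    (hp : 0 < p) (hd : 0 < d)
    (hsup1 : ∀ n : ℕ, 1 ≤ n → supUpTo p b n ≤ d * supUpTo p a n)
    (hsup2 : ∀ n : ℕ, 1 ≤ n → supUpTo p a n ≤ d * supUpTo p b n)
    (hα : ∀ n, 1 ≤ n → 0 < α n) (hc : 0 < c)
    (hreg2 : ∀ m n : ℕ, 1 ≤ m → m ≤ n → α m ≤ c * α n) :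
    (Asymp a α ↔ Asymp b α) := by
  have hα₀ (n : ℕ) (hn : 1 ≤ n) : 0 ≤ α n := (hα n hn).le
  exact ⟨Asymp.of_supUpTo_comparable hp hc hd (fun n hn => (hb n hn).le) hbmono hsup1 hsup2
      hα₀ hreg2,
    Asymp.of_supUpTo_comparable hp hc hd (fun n hn => (ha n hn).le) hamono hsup2 hsup1
      hα₀ hreg2⟩

/-- if the weighted sups of two positive nonincreasing sequences dominate
each other, then `a_n ≍ α_n ↔ b_n ≍ α_n` for every regular sequence `α`. -/
theorem two_sided_carl_trick (a b α : ℕ → ℝ) (p d c : ℝ)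
    (ha : ∀ n, 1 ≤ n → 0 < a n) (hb : ∀ n, 1 ≤ n → 0 < b n)
    (hamono : ∀ m n : ℕ, 1 ≤ m → m ≤ n → a n ≤ a m)
    (hbmono : ∀ m n : ℕ, 1 ≤ m → m ≤ n → b n ≤ b m)
    (hp : 0 < p) (hd : 0 < d)
    (hsup1 : ∀ n : ℕ, 1 ≤ n → supUpTo p b n ≤ d * supUpTo p a n)
    (hsup2 : ∀ n : ℕ, 1 ≤ n → supUpTo p a n ≤ d * supUpTo p b n)
    (hα : ∀ n, 1 ≤ n → 0 < α n) (hc : 0 < c)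
    (hreg1 : ∀ n : ℕ, 1 ≤ n → α n ≤ c * α (2 * n))
    (hreg2 : ∀ m n : ℕ, 1 ≤ m → m ≤ n → α m ≤ c * α n) :
    (Asymp a α ↔ Asymp b α) :=
  two_sided_carl_trick_general a b α p d c ha hb hamono hbmono hp hd hsup1 hsup2 hα hc hreg2
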